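/- arXiv:2502.09600 — 3 statements merged into one kernel-verified Lean document; each statement's English description precedes it below -/
import Mathlib

section
/- For every β ∈ (0,2) there exist c_0 > 0 such that for all sufficiently small η > 0, all δ ∈ (0, η²), and all f ∈ W^{1,2}_0(A(η,δ)) where A(η,δ) = B_η \ closure(B_{δ/η}) ⊂ ℝ², the three weighted Poincaré inequalities hold: c_0 ∫_{A(η,δ)} (δ/(η|x|))^β |f|²/|x|² dx ≤ ∫_{A(η,δ)} |∇f|² dx, c_0 ∫_{A(η,δ)} (|x|/η)^β |f|²/|x|² dx ≤ ∫_{A(η,δ)} |∇f|² dx, and c_0 (log(η²/δ))^{−2} ∫_{A(η,δ)} |f|²/|x|² dx ≤ ∫_{A(η,δ)} |∇f|² dx. -/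
open MeasureTheory Metric Real

/-- The neck annulus `A(η,δ) = B_η ∖ closure(B_{δ/η}) ⊂ ℝ²`. -/
noncomputable def neckAnnulus (η δ : ℝ) : Set (EuclideanSpace ℝ (Fin 2)) :=
  ball 0 η \ closedBall 0 (δ / η)

local notation "E2" => EuclideanSpace ℝ (Fin 2)

lemma mem_neckAnnulus_iff {η δ : ℝ} {x : E2} :
    x ∈ neckAnnulus η δ ↔ δ / η < ‖x‖ ∧ ‖x‖ < η := by
  simp only [neckAnnulus, Set.mem_diff, mem_ball_zero_iff, mem_closedBall_zero_iff, not_le]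
  tauto

lemma amgm_aux {a c C fx d r dfx : ℝ} (hap : 0 < a) (hC : 0 ≤ C)
    (hab : c ^ 2 * (r * r) ≤ C * a) (hr : 0 ≤ r) (hd : 0 ≤ d) (hdx : |dfx| ≤ d * r) :
    |2 * c * fx * dfx| ≤ (1/2) * (a * fx ^ 2) + (2*C) * d ^ 2 := by
  have h1 : |2 * c * fx * dfx| = 2 * |c| * |fx| * |dfx| := by
    rw [abs_mul, abs_mul, abs_mul]
    norm_num
  have h2 : 2 * |c| * |fx| * |dfx| ≤ 2 * |c| * |fx| * (d * r) := by
    apply mul_le_mul_of_nonneg_left hdx (by positivity)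
  have hc2 : |c| ^ 2 = c ^ 2 := sq_abs c
  have hf2 : |fx| ^ 2 = fx ^ 2 := sq_abs fx
  have h3 : (a * |fx|) * (2 * |c| * (d * r))
      ≤ (1/2) * (a * |fx|) ^ 2 + (1/2) * (2 * |c| * (d * r)) ^ 2 := by
    nlinarith [sq_nonneg (a * |fx| - 2 * |c| * (d * r))]
  have h4 : (1/2) * (2 * |c| * (d * r)) ^ 2 = 2 * (c ^ 2 * (r * r)) * d ^ 2 := by
    rw [← hc2]; ring
  have h5 : 2 * (c ^ 2 * (r * r)) * d ^ 2 ≤ 2 * (C * a) * d ^ 2 := by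
    nlinarith [sq_nonneg d]
  have h6 : a * (2 * |c| * |fx| * (d * r)) ≤ a * ((1/2) * (a * fx ^ 2) + (2*C) * d ^ 2) := by
    calc a * (2 * |c| * |fx| * (d * r)) = (a * |fx|) * (2 * |c| * (d * r)) := by ring
      _ ≤ (1/2) * (a * |fx|) ^ 2 + (1/2) * (2 * |c| * (d * r)) ^ 2 := h3
      _ = (1/2) * a ^ 2 * (|fx| ^ 2) + 2 * (c ^ 2 * (r * r)) * d ^ 2 := by rw [h4]; ring
      _ = (1/2) * a ^ 2 * fx ^ 2 + 2 * (c ^ 2 * (r * r)) * d ^ 2 := by rw [hf2]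
      _ ≤ (1/2) * a ^ 2 * fx ^ 2 + 2 * (C * a) * d ^ 2 := by linarith
      _ = a * ((1/2) * (a * fx ^ 2) + (2*C) * d ^ 2) := by ring
  have h7 := le_of_mul_le_mul_left h6 hap
  rw [h1]
  linarith

lemma hardy_aux {η δ : ℝ} (hη : 0 < η) (hδ : 0 < δ) (hδη : δ < η ^ 2)
    (f : E2 → ℝ) (hf : ContDiff ℝ (⊤ : ℕ∞) f) (hsupp : HasCompactSupport f)
    (hfA : tsupport f ⊆ neckAnnulus η δ)
    (ψ ψ' : ℝ → ℝ)
    (hψd : ∀ s ∈ Set.Ioi (0:ℝ), HasDerivAt ψ (ψ' s) s)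
    (hψc : ContDiffOn ℝ 1 ψ (Set.Ioi 0))
    (hψ'c : ContinuousOn ψ' (Set.Ioi 0))
    (C : ℝ) (hC : 0 ≤ C)
    (hpos : ∀ s ∈ Set.Ioo ((δ/η)^2) (η^2), 0 < 2*ψ s + 2*s*ψ' s)
    (hbound : ∀ s ∈ Set.Ioo ((δ/η)^2) (η^2), ψ s ^2 * s ≤ C * (2*ψ s + 2*s*ψ' s)) :
    ∫ x in neckAnnulus η δ, (2*ψ (‖x‖^2) + 2*‖x‖^2*ψ' (‖x‖^2)) * f x ^ 2
      ≤ 4*C* ∫ x in neckAnnulus η δ, ‖gradient f x‖^2 := by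
  have hA_meas : MeasurableSet (neckAnnulus η δ) :=
    measurableSet_ball.diff measurableSet_closedBall
  have hδη0 : 0 < δ / η := div_pos hδ hη
  have hSx : ∀ x ∈ neckAnnulus η δ, ‖x‖^2 ∈ Set.Ioo ((δ/η)^2) (η^2) := by
    intro x hx
    obtain ⟨h1, h2⟩ := mem_neckAnnulus_iff.1 hx
    exact ⟨by nlinarith [norm_nonneg x], by nlinarith [norm_nonneg x]⟩
  have hK : IsCompact (tsupport f) := hsupp
  have hKA : tsupport f ⊆ neckAnnulus η δ := hfA
  have hKs : ∀ x ∈ tsupport f, (0:ℝ) < ‖x‖^2 := by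
    intro x hx
    have := (hSx x (hKA hx)).1
    nlinarith [sq_nonneg (δ/η), (mul_pos hδη0 hδη0)]
  have hUopen : IsOpen (tsupport f)ᶜ := (isClosed_tsupport f).isOpen_compl
  -- eventual vanishing off the support
  have hfev : ∀ x ∉ tsupport f, f =ᶠ[nhds x] 0 := by
    intro x hx
    filter_upwards [hUopen.mem_nhds hx] with y hy
    exact image_eq_zero_of_notMem_tsupport hy
  -- the vector field components
  set e : Fin 2 → E2 := fun i => EuclideanSpace.single i (1:ℝ) with he
  set F : Fin 2 → E2 → ℝ := fun i x => ψ (‖x‖^2) * f x ^ 2 * x i with hF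
  have hFev : ∀ i, ∀ x ∉ tsupport f, F i =ᶠ[nhds x] 0 := by
    intro i x hx
    filter_upwards [hfev x hx] with y hy
    simp [hF, hy]
  have hf1 : ContDiff ℝ 1 f := hf.of_le (by simp)
  have hFc : ∀ i, ContDiff ℝ 1 (F i) := by
    intro i
    rw [contDiff_iff_contDiffAt]
    intro x
    by_cases hx : x ∈ tsupport f
    · have hs : (0:ℝ) < ‖x‖^2 := hKs x hx
      have h1 : ContDiffAt ℝ 1 (fun y : E2 => ψ (‖y‖^2)) x := by
        have h2 : ContDiffAt ℝ 1 ψ (‖x‖^2) := hψc.contDiffAt (isOpen_Ioi.mem_nhds hs)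
        exact h2.comp x ((contDiff_norm_sq (𝕜 := ℝ)).contDiffAt)
      exact (h1.mul ((hf1.contDiffAt).pow 2)).mul
        ((EuclideanSpace.proj (𝕜 := ℝ) i).contDiff.contDiffAt)
    · exact contDiffAt_const.congr_of_eventuallyEq (hFev i x hx)
  have hFsupp : ∀ i, HasCompactSupport (F i) := by
    intro i
    apply hsupp.mono'
    intro x hx
    simp only [Function.mem_support, ne_eq] at hx
    by_contra hxs
    exact hx (by simp [hF, image_eq_zero_of_notMem_tsupport hxs])
  -- pointwise divergence identity
  have hdiv : ∀ x, (∑ i, fderiv ℝ (F i) x (e i))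
      = (2*ψ (‖x‖^2) + 2*‖x‖^2*ψ' (‖x‖^2)) * f x ^ 2
        + 2 * ψ (‖x‖^2) * f x * fderiv ℝ f x x := by
    intro x
    by_cases hx : x ∈ tsupport f
    · have hs : (0:ℝ) < ‖x‖^2 := hKs x hx
      have hS : HasFDerivAt (fun y : E2 => ‖y‖^2) (2 • (innerSL ℝ x)) x :=
        (hasStrictFDerivAt_norm_sq x).hasFDerivAt
      have hψS : HasFDerivAt (fun y : E2 => ψ (‖y‖^2))
          (ψ' (‖x‖^2) • (2 • (innerSL ℝ x))) x :=
        (hψd _ hs).comp_hasFDerivAt x hS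
      have hfd : HasFDerivAt f (fderiv ℝ f x) x :=
        (hf1.differentiable one_ne_zero x).hasFDerivAt
      have hf2 : HasFDerivAt (fun y => f y ^ 2)
          (f x • fderiv ℝ f x + f x • fderiv ℝ f x) x := by
        have := hfd.mul hfd
        rw [show (fun y => f y ^ 2) = f * f from funext fun y => by simp [pow_two]]; exact this
      have key : ∀ i, fderiv ℝ (F i) x (e i)
          = ψ (‖x‖^2) * f x ^ 2 * (e i) i
            + x i * (ψ (‖x‖^2) * (2 * f x * fderiv ℝ f x (e i))
              + f x ^ 2 * (ψ' (‖x‖^2) * (2 * inner ℝ x (e i)))) := by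
        intro i
        have hproj : HasFDerivAt (fun y : E2 => y i)
            (EuclideanSpace.proj (𝕜 := ℝ) i) x :=
          (EuclideanSpace.proj (𝕜 := ℝ) i).hasFDerivAt
        have hFi : HasFDerivAt (F i)
            ((ψ (‖x‖^2) * f x ^ 2) • (EuclideanSpace.proj (𝕜 := ℝ) i)
              + (x i) • ((fun y : E2 => ψ (‖y‖^2)) x • (f x • fderiv ℝ f x + f x • fderiv ℝ f x)
                + (f x ^ 2) • (ψ' (‖x‖^2) • (2 • (innerSL ℝ x))))) x := by
          exact (hψS.mul hf2).mul hproj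
        rw [hFi.fderiv]
        simp only [ContinuousLinearMap.add_apply, ContinuousLinearMap.coe_smul',
          Pi.smul_apply, smul_eq_mul, ContinuousLinearMap.smul_apply, innerSL_apply_apply]
        have hpe : (EuclideanSpace.proj (𝕜 := ℝ) i) (e i) = (e i) i := rfl
        rw [hpe]
        ring
      have hee : ∀ i : Fin 2, (e i) i = 1 := by
        intro i; simp [he, EuclideanSpace.single_apply]
      have hinner : ∀ i : Fin 2, (inner ℝ x (e i) : ℝ) = x i := by
        intro i; simp [he, EuclideanSpace.inner_single_right]
      have hxsum : (x 0) • e 0 + (x 1) • e 1 = x := by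
        ext j
        fin_cases j <;>
          simp [he, EuclideanSpace.single_apply, PiLp.add_apply, PiLp.smul_apply]
      have hxD : x 0 * fderiv ℝ f x (e 0) + x 1 * fderiv ℝ f x (e 1) = fderiv ℝ f x x := by
        have h := congrArg (fderiv ℝ f x) hxsum.symm
        rw [h, map_add]
        simp [ContinuousLinearMap.map_smul, smul_eq_mul]
      have hx2 : x 0 ^ 2 + x 1 ^ 2 = ‖x‖^2 := by
        rw [EuclideanSpace.norm_eq, Real.sq_sqrt (by positivity)]
        simp [Fin.sum_univ_two, Real.norm_eq_abs, sq_abs]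
      rw [Fin.sum_univ_two, key 0, key 1, hee 0, hee 1, hinner 0, hinner 1]
      rw [← hxD, ← hx2]
      ring
    · have h0 : ∀ i : Fin 2, fderiv ℝ (F i) x (e i) = 0 := by
        intro i
        have h : fderiv ℝ (F i) x = 0 := (hFev i x hx).fderiv_eq.trans (fderiv_const_apply 0)
        rw [h]; rfl
      have hfx : f x = 0 := image_eq_zero_of_notMem_tsupport hx
      rw [Fin.sum_univ_two, h0 0, h0 1, hfx]
      ring
  -- integrability
  have hfderiv_cont : ∀ i, Continuous fun x => fderiv ℝ (F i) x (e i) := by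
    intro i
    exact ((hFc i).continuous_fderiv one_ne_zero).clm_apply continuous_const
  have hfderiv_supp : ∀ i, HasCompactSupport fun x => fderiv ℝ (F i) x (e i) := by
    intro i
    apply hsupp.mono'
    intro x hx
    simp only [Function.mem_support, ne_eq] at hx
    by_contra hxs
    apply hx
    have h : fderiv ℝ (F i) x = 0 := (hFev i x hxs).fderiv_eq.trans (fderiv_const_apply 0)
    rw [h]; rfl
  have hFderiv_int : ∀ i, Integrable (fun x => fderiv ℝ (F i) x (e i)) :=
    fun i => (hfderiv_cont i).integrable_of_hasCompactSupport (hfderiv_supp i)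
  have hFint : ∀ i, Integrable (F i) :=
    fun i => ((hFc i).continuous).integrable_of_hasCompactSupport (hFsupp i)
  -- integration by parts: each divergence term integrates to zero
  have hibp : ∀ i, (∫ x, fderiv ℝ (F i) x (e i)) = 0 := by
    intro i
    have h := integral_mul_fderiv_eq_neg_fderiv_mul_of_integrable
      (f := F i) (g := fun _ => (1:ℝ)) (v := e i) (μ := volume)
      (by simpa using hFderiv_int i)
      (by simp [fderiv_fun_const])
      (by simpa using hFint i)
      (fun x _ => (hFc i).differentiable one_ne_zero x) (fun x _ => differentiableAt_const (1:ℝ))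
    simp only [fderiv_fun_const, Pi.zero_apply, ContinuousLinearMap.zero_apply, mul_zero,
      mul_one, integral_zero] at h
    linarith [h]
  -- hence ∫ (P + Q) = 0
  set P : E2 → ℝ := fun x => (2*ψ (‖x‖^2) + 2*‖x‖^2*ψ' (‖x‖^2)) * f x ^ 2 with hP
  set Q : E2 → ℝ := fun x => 2 * ψ (‖x‖^2) * f x * fderiv ℝ f x x with hQ
  have hPQ : ∫ x, (P x + Q x) = 0 := by
    have h1 : (fun x => P x + Q x) = fun x => ∑ i, fderiv ℝ (F i) x (e i) :=
      funext fun x => (hdiv x).symm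
    rw [h1, integral_finset_sum _ (fun i _ => hFderiv_int i)]
    simp [hibp]
  -- continuity and integrability of P, Q, and the gradient term
  have hfderiv_f_cont : Continuous fun x => fderiv ℝ f x :=
    hf1.continuous_fderiv one_ne_zero
  have hPcont : Continuous P := by
    rw [continuous_iff_continuousAt]
    intro x
    by_cases hx : x ∈ tsupport f
    · have hs : (0:ℝ) < ‖x‖^2 := hKs x hx
      have hn : ContinuousAt (fun y : E2 => ‖y‖^2) x :=
        ((contDiff_norm_sq (𝕜 := ℝ) (n := 1) (E := E2)).continuous).continuousAt
      have hψa : ContinuousAt (fun y : E2 => ψ (‖y‖^2)) x :=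
        ContinuousAt.comp (g := ψ) (f := fun y : E2 => ‖y‖^2)
          (hψc.continuousOn.continuousAt (isOpen_Ioi.mem_nhds hs)) hn
      have hψ'a : ContinuousAt (fun y : E2 => ψ' (‖y‖^2)) x :=
        ContinuousAt.comp (g := ψ') (f := fun y : E2 => ‖y‖^2)
          (hψ'c.continuousAt (isOpen_Ioi.mem_nhds hs)) hn
      exact ((((continuousAt_const.mul hψa).add
        ((continuousAt_const.mul hn).mul hψ'a))).mul
        ((hf1.continuous.continuousAt).pow 2))
    · have hev : P =ᶠ[nhds x] (fun _ => (0:ℝ)) := by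
        filter_upwards [hfev x hx] with y hy
        simp only [hP]
        simp only [Pi.zero_apply] at hy
        simp [hy]
      exact (continuousAt_const (y := (0:ℝ))).congr hev.symm
  have hQcont : Continuous Q := by
    rw [continuous_iff_continuousAt]
    intro x
    by_cases hx : x ∈ tsupport f
    · have hs : (0:ℝ) < ‖x‖^2 := hKs x hx
      have hn : ContinuousAt (fun y : E2 => ‖y‖^2) x :=
        ((contDiff_norm_sq (𝕜 := ℝ) (n := 1) (E := E2)).continuous).continuousAt
      have hψa : ContinuousAt (fun y : E2 => ψ (‖y‖^2)) x :=
        ContinuousAt.comp (g := ψ) (f := fun y : E2 => ‖y‖^2)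
          (hψc.continuousOn.continuousAt (isOpen_Ioi.mem_nhds hs)) hn
      have hd : ContinuousAt (fun y : E2 => fderiv ℝ f y y) x :=
        (hfderiv_f_cont.clm_apply continuous_id).continuousAt
      exact (((continuousAt_const.mul hψa).mul
        (hf1.continuous.continuousAt)).mul hd)
    · have hev : Q =ᶠ[nhds x] (fun _ => (0:ℝ)) := by
        filter_upwards [hfev x hx] with y hy
        simp only [hQ]
        simp only [Pi.zero_apply] at hy
        simp [hy]
      exact (continuousAt_const (y := (0:ℝ))).congr hev.symm
  have hPsupp : HasCompactSupport P := by
    apply hsupp.mono'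
    intro x hx
    simp only [Function.mem_support, ne_eq] at hx
    by_contra hxs
    exact hx (by simp [hP, image_eq_zero_of_notMem_tsupport hxs])
  have hQsupp : HasCompactSupport Q := by
    apply hsupp.mono'
    intro x hx
    simp only [Function.mem_support, ne_eq] at hx
    by_contra hxs
    exact hx (by simp [hQ, image_eq_zero_of_notMem_tsupport hxs])
  have hPint : Integrable P := hPcont.integrable_of_hasCompactSupport hPsupp
  have hQint : Integrable Q := hQcont.integrable_of_hasCompactSupport hQsupp
  have hGcont : Continuous fun x => ‖fderiv ℝ f x‖^2 :=
    (hfderiv_f_cont.norm).pow 2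
  have hGsupp : HasCompactSupport fun x => ‖fderiv ℝ f x‖^2 := by
    apply hsupp.mono'
    intro x hx
    simp only [Function.mem_support, ne_eq] at hx
    by_contra hxs
    apply hx
    have h : fderiv ℝ f x = 0 := (hfev x hxs).fderiv_eq.trans (fderiv_const_apply 0)
    simp [h]
  have hGint : Integrable fun x => ‖fderiv ℝ f x‖^2 :=
    hGcont.integrable_of_hasCompactSupport hGsupp
  -- the pointwise estimate
  have hpoint : ∀ x, |Q x| ≤ (1/2) * P x + (2*C) * ‖fderiv ℝ f x‖^2 := by
    intro x
    by_cases hx : x ∈ tsupport f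
    · have hsmem := hSx x (hKA hx)
      have hap : 0 < 2*ψ (‖x‖^2) + 2*‖x‖^2*ψ' (‖x‖^2) := hpos _ hsmem
      have hab : ψ (‖x‖^2) ^ 2 * (‖x‖ * ‖x‖)
          ≤ C * (2*ψ (‖x‖^2) + 2*‖x‖^2*ψ' (‖x‖^2)) := by
        rw [← pow_two]; exact hbound _ hsmem
      have hdx : |fderiv ℝ f x x| ≤ ‖fderiv ℝ f x‖ * ‖x‖ := by
        calc |fderiv ℝ f x x| = ‖fderiv ℝ f x x‖ := (Real.norm_eq_abs _).symm
        _ ≤ ‖fderiv ℝ f x‖ * ‖x‖ := (fderiv ℝ f x).le_opNorm x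
      have h := amgm_aux (fx := f x) hap hC hab (norm_nonneg x) (norm_nonneg _) hdx
      simpa only [hP, hQ] using h
    · have hfx : f x = 0 := image_eq_zero_of_notMem_tsupport hx
      have hQx : Q x = 0 := by simp [hQ, hfx]
      have hPx : P x = 0 := by simp [hP, hfx]
      rw [hQx, hPx]
      simp only [abs_zero]
      positivity
  -- assemble the main estimate over the whole space
  have hsplit : (∫ x, P x) + (∫ x, Q x) = 0 := by
    rw [← integral_add hPint hQint]; exact hPQ
  have habs : (∫ x, P x) ≤ ∫ x, ((1/2) * P x + (2*C) * ‖fderiv ℝ f x‖^2) := by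
    have h1 : (∫ x, P x) = - ∫ x, Q x := by linarith
    have h2 : - (∫ x, Q x) ≤ |∫ x, Q x| := neg_le_abs _
    have h3 : |∫ x, Q x| ≤ ∫ x, |Q x| := by
      simpa [Real.norm_eq_abs] using norm_integral_le_integral_norm (μ := volume) Q
    have h4 : (∫ x, |Q x|) ≤ ∫ x, ((1/2) * P x + (2*C) * ‖fderiv ℝ f x‖^2) := by
      apply integral_mono hQint.abs ((hPint.const_mul _).add (hGint.const_mul _))
      exact hpoint
    linarith
  rw [integral_add (hPint.const_mul _) (hGint.const_mul _),
    integral_const_mul, integral_const_mul] at habs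
  have hmain : (∫ x, P x) ≤ 4*C* ∫ x, ‖fderiv ℝ f x‖^2 := by linarith
  -- pass to set integrals
  have hPset : (∫ x in neckAnnulus η δ, P x) = ∫ x, P x := by
    apply setIntegral_eq_integral_of_forall_compl_eq_zero
    intro x hx
    have hxs : x ∉ tsupport f := fun h => hx (hKA h)
    simp [hP, image_eq_zero_of_notMem_tsupport hxs]
  have hgrad : ∀ x : E2, ‖gradient f x‖ = ‖fderiv ℝ f x‖ := by
    intro x
    simp [gradient, LinearIsometryEquiv.norm_map]
  have hGset : (∫ x in neckAnnulus η δ, ‖gradient f x‖^2) = ∫ x, ‖fderiv ℝ f x‖^2 := by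
    have h1 : (fun x : E2 => ‖gradient f x‖^2) = fun x => ‖fderiv ℝ f x‖^2 :=
      funext fun x => by rw [hgrad]
    rw [h1]
    apply setIntegral_eq_integral_of_forall_compl_eq_zero
    intro x hx
    have hxs : x ∉ tsupport f := fun h => hx (hKA h)
    have h : fderiv ℝ f x = 0 := (hfev x hxs).fderiv_eq.trans (fderiv_const_apply 0)
    simp [h]
  calc ∫ x in neckAnnulus η δ, (2*ψ (‖x‖^2) + 2*‖x‖^2*ψ' (‖x‖^2)) * f x ^ 2
      = ∫ x, P x := hPset
    _ ≤ 4*C* ∫ x, ‖fderiv ℝ f x‖^2 := hmain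
    _ = 4*C* ∫ x in neckAnnulus η δ, ‖gradient f x‖^2 := by rw [hGset]


lemma arith3_aux {L G b : ℝ} (hL : L ≠ 0) : b/16 * L⁻¹ ^ 2 * (4*L^2*G) = b/4 * G := by
  field_simp
  ring

lemma sq_rpow_aux {r : ℝ} (hr : 0 < r) (q : ℝ) : (r^2) ^ q = r ^ (2*q) := by
  rw [← Real.rpow_natCast r 2, ← Real.rpow_mul hr.le]
  norm_num

/-- Weighted Poincaré inequalities on degenerating annuli: for every `β ∈ (0,2)`
there are `c₀ > 0` and `η₀ > 0` such that for all `η ∈ (0,η₀)`, all `δ ∈ (0,η²)`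
and all `f ∈ W^{1,2}₀(A(η,δ))`:
`c₀ ∫ (δ/(η|x|))^β |f|²/|x|² ≤ ∫ |∇f|²`, `c₀ ∫ (|x|/η)^β |f|²/|x|² ≤ ∫ |∇f|²`, and
`c₀ (log(η²/δ))⁻² ∫ |f|²/|x|² ≤ ∫ |∇f|²`. -/
theorem weighted_poincare_on_annuli (β : ℝ) (hβ : β ∈ Set.Ioo (0 : ℝ) 2) :
    ∃ c₀ > (0 : ℝ), ∃ η₀ > (0 : ℝ), ∀ η ∈ Set.Ioo (0 : ℝ) η₀, ∀ δ ∈ Set.Ioo (0 : ℝ) (η ^ 2),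
      ∀ f : EuclideanSpace ℝ (Fin 2) → ℝ, ContDiff ℝ (⊤ : ℕ∞) f → HasCompactSupport f →
        tsupport f ⊆ neckAnnulus η δ →
        (c₀ * ∫ x in neckAnnulus η δ, (δ / (η * ‖x‖)) ^ β * (f x ^ 2 / ‖x‖ ^ 2)
            ≤ ∫ x in neckAnnulus η δ, ‖gradient f x‖ ^ 2) ∧
        (c₀ * ∫ x in neckAnnulus η δ, (‖x‖ / η) ^ β * (f x ^ 2 / ‖x‖ ^ 2)
            ≤ ∫ x in neckAnnulus η δ, ‖gradient f x‖ ^ 2) ∧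
        (c₀ * (Real.log (η ^ 2 / δ))⁻¹ ^ 2 * ∫ x in neckAnnulus η δ, f x ^ 2 / ‖x‖ ^ 2
            ≤ ∫ x in neckAnnulus η δ, ‖gradient f x‖ ^ 2) := by
  obtain ⟨hβ0, hβ2⟩ := hβ
  have hβne : β ≠ 0 := ne_of_gt hβ0
  have hβ4 : β^2 ≤ 4 := by nlinarith
  refine ⟨β^2/16, by positivity, 1, one_pos, ?_⟩
  rintro η ⟨hη0, hη1⟩ δ ⟨hδ0, hδη⟩ f hf hsupp hfA
  have hA_meas : MeasurableSet (neckAnnulus η δ) :=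
    measurableSet_ball.diff measurableSet_closedBall
  have hδη0 : 0 < δ / η := div_pos hδ0 hη0
  have hG0 : 0 ≤ ∫ x in neckAnnulus η δ, ‖gradient f x‖ ^ 2 :=
    setIntegral_nonneg hA_meas (fun x _ => sq_nonneg _)
  have hSx : ∀ x ∈ neckAnnulus η δ, ‖x‖^2 ∈ Set.Ioo ((δ/η)^2) (η^2) := by
    intro x hx
    obtain ⟨h1, h2⟩ := mem_neckAnnulus_iff.1 hx
    exact ⟨by nlinarith [norm_nonneg x], by nlinarith [norm_nonneg x]⟩
  have hxpos : ∀ x ∈ neckAnnulus η δ, (0:ℝ) < ‖x‖ := by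
    intro x hx
    exact lt_of_le_of_lt hδη0.le (mem_neckAnnulus_iff.1 hx).1
  refine ⟨?_, ?_, ?_⟩
  -- First inequality: weight (δ/(η‖x‖))^β / ‖x‖²
  · set c : ℝ := β⁻¹ * (δ/η)^β with hc
    set p : ℝ := -(β/2)-1 with hp
    set ψ : ℝ → ℝ := fun s => -(β⁻¹ * (δ/η)^β * s ^ p) with hψ
    set ψ' : ℝ → ℝ := fun s => -(β⁻¹ * (δ/η)^β * (p * s ^ (p-1))) with hψ'
    have hψd : ∀ s ∈ Set.Ioi (0:ℝ), HasDerivAt ψ (ψ' s) s := by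
      intro s hs
      exact ((Real.hasDerivAt_rpow_const (Or.inl (ne_of_gt hs))).const_mul
        (β⁻¹ * (δ/η)^β)).neg
    have hψc : ContDiffOn ℝ 1 ψ (Set.Ioi 0) := by
      intro s hs
      exact ((contDiffAt_const.mul
        (Real.contDiffAt_rpow_const_of_ne (ne_of_gt hs))).neg).contDiffWithinAt
    have hψ'c : ContinuousOn ψ' (Set.Ioi 0) := by
      intro s hs
      refine ContinuousAt.continuousWithinAt ?_
      exact ((continuousAt_const.mul (continuousAt_const.mul
        (Real.continuousAt_rpow_const s _ (Or.inl (ne_of_gt hs))))).neg)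
    have key : ∀ s ∈ Set.Ioo ((δ/η)^2) (η^2),
        2*ψ s + 2*s*ψ' s = (δ/η)^β * s ^ p := by
      intro s hs
      have hs0 : (0:ℝ) < s := lt_trans (by positivity) hs.1
      have hss : s ^ (p-1) = s ^ p / s := by
        rw [Real.rpow_sub hs0, Real.rpow_one]
      simp only [hψ, hψ']
      rw [hss]
      field_simp
      ring
    have hpos : ∀ s ∈ Set.Ioo ((δ/η)^2) (η^2), 0 < 2*ψ s + 2*s*ψ' s := by
      intro s hs
      have hs0 : (0:ℝ) < s := lt_trans (by positivity) hs.1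
      rw [key s hs]
      have := Real.rpow_pos_of_pos hδη0 β
      have := Real.rpow_pos_of_pos hs0 p
      positivity
    have hbound : ∀ s ∈ Set.Ioo ((δ/η)^2) (η^2),
        ψ s ^ 2 * s ≤ (β^2)⁻¹ * (2*ψ s + 2*s*ψ' s) := by
      intro s hs
      have hs0 : (0:ℝ) < s := lt_trans (by positivity) hs.1
      rw [key s hs]
      have hD : (0:ℝ) < (δ/η)^β := Real.rpow_pos_of_pos hδη0 β
      have hu : (0:ℝ) < s ^ p := Real.rpow_pos_of_pos hs0 p
      have hus : s ^ p * s = s ^ (-(β/2)) := by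
        rw [hp, Real.rpow_sub hs0, Real.rpow_one]
        field_simp
      have hDs : (δ/η)^β * s ^ (-(β/2)) ≤ 1 := by
        have h1 : ((δ/η)^2 : ℝ) ^ (β/2) ≤ s ^ (β/2) :=
          Real.rpow_le_rpow (by positivity) hs.1.le (by positivity)
        have h2 : ((δ/η)^2 : ℝ) ^ (β/2) = (δ/η)^β := by
          rw [sq_rpow_aux hδη0, show 2*(β/2) = β by ring]
        have h3 : (0:ℝ) < s ^ (β/2) := Real.rpow_pos_of_pos hs0 _
        rw [Real.rpow_neg hs0.le]
        calc (δ/η)^β * (s ^ (β/2))⁻¹ ≤ s ^ (β/2) * (s ^ (β/2))⁻¹ := by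
              apply mul_le_mul_of_nonneg_right (h2 ▸ h1) (by positivity)
          _ = 1 := mul_inv_cancel₀ (ne_of_gt h3)
      calc ψ s ^ 2 * s = (β^2)⁻¹ * ((δ/η)^β * s ^ p) * ((δ/η)^β * (s ^ p * s)) := by
            simp only [hψ]; ring
        _ = (β^2)⁻¹ * ((δ/η)^β * s ^ p) * ((δ/η)^β * s ^ (-(β/2))) := by rw [hus]
        _ ≤ (β^2)⁻¹ * ((δ/η)^β * s ^ p) * 1 := by
            apply mul_le_mul_of_nonneg_left hDs
            positivity
        _ = (β^2)⁻¹ * ((δ/η)^β * s ^ p) := mul_one _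
    have hres := hardy_aux hη0 hδ0 hδη f hf hsupp hfA ψ ψ' hψd hψc hψ'c
      ((β^2)⁻¹) (by positivity) hpos hbound
    have hint_eq : (∫ x in neckAnnulus η δ, (2*ψ (‖x‖^2) + 2*‖x‖^2*ψ' (‖x‖^2)) * f x ^ 2)
        = ∫ x in neckAnnulus η δ, (δ / (η * ‖x‖)) ^ β * (f x ^ 2 / ‖x‖ ^ 2) := by
      apply setIntegral_congr_fun hA_meas
      intro x hx
      have hr : (0:ℝ) < ‖x‖ := hxpos x hx
      dsimp only
      rw [key _ (hSx x hx)]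
      have h1 : (‖x‖^2 : ℝ) ^ p = ‖x‖ ^ (2*p) := sq_rpow_aux hr p
      have h2 : ‖x‖ ^ (2*p) = (‖x‖ ^ β)⁻¹ * (‖x‖^2)⁻¹ := by
        rw [show 2*p = -β + -(2:ℕ) by rw [hp]; push_cast; ring]
        rw [Real.rpow_add hr, Real.rpow_neg hr.le, Real.rpow_neg hr.le,
          Real.rpow_natCast]
      have h3 : (δ / (η * ‖x‖)) ^ β = δ ^ β / (η ^ β * ‖x‖ ^ β) := by
        rw [Real.div_rpow hδ0.le (by positivity), Real.mul_rpow hη0.le hr.le]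
      have h4 : ((δ/η) : ℝ) ^ β = δ ^ β / η ^ β := Real.div_rpow hδ0.le hη0.le β
      rw [h1, h2, h3, h4]
      have hβη : (0:ℝ) < η ^ β := Real.rpow_pos_of_pos hη0 β
      have hβr : (0:ℝ) < ‖x‖ ^ β := Real.rpow_pos_of_pos hr β
      field_simp
    rw [hint_eq] at hres
    have hmul := mul_le_mul_of_nonneg_left hres
      (le_of_lt (show (0:ℝ) < β^2/16 by positivity))
    have he : β^2/16 * (4*(β^2)⁻¹* ∫ x in neckAnnulus η δ, ‖gradient f x‖^2)
        = (1/4) * ∫ x in neckAnnulus η δ, ‖gradient f x‖^2 := by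
      field_simp
      ring
    rw [he] at hmul
    linarith
  -- Second inequality: weight (‖x‖/η)^β / ‖x‖²
  · set q : ℝ := β/2 - 1 with hq
    set ψ : ℝ → ℝ := fun s => β⁻¹ * η ^ (-β) * s ^ q with hψ
    set ψ' : ℝ → ℝ := fun s => β⁻¹ * η ^ (-β) * (q * s ^ (q-1)) with hψ'
    have hψd : ∀ s ∈ Set.Ioi (0:ℝ), HasDerivAt ψ (ψ' s) s := by
      intro s hs
      exact (Real.hasDerivAt_rpow_const (Or.inl (ne_of_gt hs))).const_mul (β⁻¹ * η ^ (-β))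
    have hψc : ContDiffOn ℝ 1 ψ (Set.Ioi 0) := by
      intro s hs
      exact (contDiffAt_const.mul
        (Real.contDiffAt_rpow_const_of_ne (ne_of_gt hs))).contDiffWithinAt
    have hψ'c : ContinuousOn ψ' (Set.Ioi 0) := by
      intro s hs
      refine ContinuousAt.continuousWithinAt ?_
      exact (continuousAt_const.mul (continuousAt_const.mul
        (Real.continuousAt_rpow_const s _ (Or.inl (ne_of_gt hs)))))
    have key : ∀ s ∈ Set.Ioo ((δ/η)^2) (η^2),
        2*ψ s + 2*s*ψ' s = η ^ (-β) * s ^ q := by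
      intro s hs
      have hs0 : (0:ℝ) < s := lt_trans (by positivity) hs.1
      have hss : s ^ (q-1) = s ^ q / s := by
        rw [Real.rpow_sub hs0, Real.rpow_one]
      simp only [hψ, hψ']
      rw [hss]
      field_simp
      ring
    have hηβ : (0:ℝ) < η ^ (-β) := Real.rpow_pos_of_pos hη0 _
    have hηβ' : (0:ℝ) < η ^ β := Real.rpow_pos_of_pos hη0 β
    have hpos : ∀ s ∈ Set.Ioo ((δ/η)^2) (η^2), 0 < 2*ψ s + 2*s*ψ' s := by
      intro s hs
      have hs0 : (0:ℝ) < s := lt_trans (by positivity) hs.1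
      rw [key s hs]
      have := Real.rpow_pos_of_pos hs0 q
      positivity
    have hbound : ∀ s ∈ Set.Ioo ((δ/η)^2) (η^2),
        ψ s ^ 2 * s ≤ (β^2)⁻¹ * (2*ψ s + 2*s*ψ' s) := by
      intro s hs
      have hs0 : (0:ℝ) < s := lt_trans (by positivity) hs.1
      rw [key s hs]
      have hu : (0:ℝ) < s ^ q := Real.rpow_pos_of_pos hs0 q
      have hus : s ^ q * s = s ^ (β/2) := by
        rw [hq, Real.rpow_sub hs0, Real.rpow_one]
        field_simp
      have hDs : η ^ (-β) * s ^ (β/2) ≤ 1 := by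
        have h1 : s ^ (β/2) ≤ ((η^2 : ℝ)) ^ (β/2) :=
          Real.rpow_le_rpow hs0.le hs.2.le (by positivity)
        have h2 : ((η^2 : ℝ)) ^ (β/2) = η ^ β := by
          rw [sq_rpow_aux hη0, show 2*(β/2) = β by ring]
        calc η ^ (-β) * s ^ (β/2) ≤ η ^ (-β) * η ^ β := by
              apply mul_le_mul_of_nonneg_left (h2 ▸ h1) hηβ.le
          _ = 1 := by
              rw [Real.rpow_neg hη0.le]
              exact inv_mul_cancel₀ (ne_of_gt hηβ')
      calc ψ s ^ 2 * s = (β^2)⁻¹ * (η ^ (-β) * s ^ q) * (η ^ (-β) * (s ^ q * s)) := by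
            simp only [hψ]; ring
        _ = (β^2)⁻¹ * (η ^ (-β) * s ^ q) * (η ^ (-β) * s ^ (β/2)) := by rw [hus]
        _ ≤ (β^2)⁻¹ * (η ^ (-β) * s ^ q) * 1 := by
            apply mul_le_mul_of_nonneg_left hDs
            positivity
        _ = (β^2)⁻¹ * (η ^ (-β) * s ^ q) := mul_one _
    have hres := hardy_aux hη0 hδ0 hδη f hf hsupp hfA ψ ψ' hψd hψc hψ'c
      ((β^2)⁻¹) (by positivity) hpos hbound
    have hint_eq : (∫ x in neckAnnulus η δ, (2*ψ (‖x‖^2) + 2*‖x‖^2*ψ' (‖x‖^2)) * f x ^ 2)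
        = ∫ x in neckAnnulus η δ, (‖x‖ / η) ^ β * (f x ^ 2 / ‖x‖ ^ 2) := by
      apply setIntegral_congr_fun hA_meas
      intro x hx
      have hr : (0:ℝ) < ‖x‖ := hxpos x hx
      dsimp only
      rw [key _ (hSx x hx)]
      have h1 : (‖x‖^2 : ℝ) ^ q = ‖x‖ ^ (2*q) := sq_rpow_aux hr q
      have h2 : ‖x‖ ^ (2*q) = ‖x‖ ^ β * (‖x‖^2)⁻¹ := by
        rw [show 2*q = β + -(2:ℕ) by rw [hq]; push_cast; ring]
        rw [Real.rpow_add hr, Real.rpow_neg hr.le, Real.rpow_natCast]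
      have h3 : (‖x‖ / η) ^ β = ‖x‖ ^ β / η ^ β := Real.div_rpow hr.le hη0.le β
      have h4 : (η : ℝ) ^ (-β) = (η ^ β)⁻¹ := Real.rpow_neg hη0.le β
      rw [h1, h2, h3, h4]
      field_simp
    rw [hint_eq] at hres
    have hmul := mul_le_mul_of_nonneg_left hres
      (le_of_lt (show (0:ℝ) < β^2/16 by positivity))
    have he : β^2/16 * (4*(β^2)⁻¹* ∫ x in neckAnnulus η δ, ‖gradient f x‖^2)
        = (1/4) * ∫ x in neckAnnulus η δ, ‖gradient f x‖^2 := by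
      field_simp
      ring
    rw [he] at hmul
    linarith
  -- Third inequality: log weight
  · set c : ℝ := 2 * Real.log (η/δ) with hcdef
    set L : ℝ := Real.log (η^2/δ) with hLdef
    have hL0 : 0 < L := Real.log_pos ((one_lt_div hδ0).2 hδη)
    set ψ : ℝ → ℝ := fun s => (Real.log s + c) / (2*s) with hψ
    set ψ' : ℝ → ℝ := fun s => (s⁻¹ * (2*s) - (Real.log s + c) * (2*1)) / (2*s)^2 with hψ'
    have hψd : ∀ s ∈ Set.Ioi (0:ℝ), HasDerivAt ψ (ψ' s) s := by
      intro s hs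
      have hs0 : (0:ℝ) < s := hs
      exact ((Real.hasDerivAt_log (ne_of_gt hs0)).add_const c).div
        ((hasDerivAt_id s).const_mul 2) (by positivity)
    have hψc : ContDiffOn ℝ 1 ψ (Set.Ioi 0) := by
      intro s hs
      have hs0 : (0:ℝ) < s := hs
      refine ContDiffAt.contDiffWithinAt ?_
      exact ((Real.contDiffAt_log.2 (ne_of_gt hs0)).add contDiffAt_const).div
        (contDiffAt_const.mul contDiffAt_id) (by positivity)
    have hψ'c : ContinuousOn ψ' (Set.Ioi 0) := by
      intro s hs
      have hs0 : (0:ℝ) < s := hs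
      refine ContinuousAt.continuousWithinAt ?_
      have hlog : ContinuousAt Real.log s :=
        Real.continuousAt_log (ne_of_gt hs0)
      exact (((continuousAt_id.inv₀ (ne_of_gt hs0)).mul
        (continuousAt_const.mul continuousAt_id)).sub
        ((hlog.add continuousAt_const).mul continuousAt_const)).div
        (((continuousAt_const.mul continuousAt_id)).pow 2) (by positivity)
    have key : ∀ s ∈ Set.Ioo ((δ/η)^2) (η^2),
        2*ψ s + 2*s*ψ' s = s⁻¹ := by
      intro s hs
      have hs0 : (0:ℝ) < s := lt_trans (by positivity) hs.1
      simp only [hψ, hψ']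
      field_simp
      ring
    have hpos : ∀ s ∈ Set.Ioo ((δ/η)^2) (η^2), 0 < 2*ψ s + 2*s*ψ' s := by
      intro s hs
      have hs0 : (0:ℝ) < s := lt_trans (by positivity) hs.1
      rw [key s hs]
      positivity
    have hbound : ∀ s ∈ Set.Ioo ((δ/η)^2) (η^2),
        ψ s ^ 2 * s ≤ L^2 * (2*ψ s + 2*s*ψ' s) := by
      intro s hs
      have hs0 : (0:ℝ) < s := lt_trans (by positivity) hs.1
      rw [key s hs]
      have hcval : c = 2*(Real.log η - Real.log δ) := by
        rw [hcdef, Real.log_div (ne_of_gt hη0) (ne_of_gt hδ0)]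
      have hLval : L = 2*Real.log η - Real.log δ := by
        rw [hLdef, Real.log_div (by positivity) (ne_of_gt hδ0), Real.log_pow]
        push_cast
        ring
      have hlb : -c < Real.log s := by
        have h1 : Real.log ((δ/η)^2) < Real.log s := Real.log_lt_log (by positivity) hs.1
        have h2 : Real.log ((δ/η)^2) = 2 * Real.log (δ/η) := by
          rw [Real.log_pow]; norm_num
        have h3 : Real.log (δ/η) = Real.log δ - Real.log η :=
          Real.log_div (ne_of_gt hδ0) (ne_of_gt hη0)
        rw [h2, h3] at h1
        rw [hcval]
        linarith
      have hub : Real.log s < 2 * Real.log η := by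
        have h1 : Real.log s < Real.log (η^2) := Real.log_lt_log hs0 hs.2
        rw [Real.log_pow] at h1
        push_cast at h1
        linarith
      have hsq : (Real.log s + c)^2 ≤ (2*L)^2 := by
        apply sq_le_sq'
        · rw [hcval, hLval]
          rw [hcval] at hlb
          linarith
        · rw [hcval, hLval]
          rw [hcval] at hlb
          linarith
      have heq : ψ s ^ 2 * s = (Real.log s + c)^2 / (4*s) := by
        simp only [hψ]
        rw [div_pow, div_mul_eq_mul_div, div_eq_div_iff (by positivity) (by positivity)]
        ring
      rw [heq]
      calc (Real.log s + c)^2 / (4*s) ≤ (2*L)^2 / (4*s) := by gcongr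
        _ = L^2 * s⁻¹ := by field_simp; ring
    have hres := hardy_aux hη0 hδ0 hδη f hf hsupp hfA ψ ψ' hψd hψc hψ'c
      (L^2) (by positivity) hpos hbound
    have hint_eq : (∫ x in neckAnnulus η δ, (2*ψ (‖x‖^2) + 2*‖x‖^2*ψ' (‖x‖^2)) * f x ^ 2)
        = ∫ x in neckAnnulus η δ, f x ^ 2 / ‖x‖ ^ 2 := by
      apply setIntegral_congr_fun hA_meas
      intro x hx
      dsimp only
      rw [key _ (hSx x hx), inv_mul_eq_div]
    rw [hint_eq] at hres
    have hk : (0:ℝ) ≤ β^2/16 * L⁻¹ ^ 2 := by positivity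
    have hmul := mul_le_mul_of_nonneg_left hres hk
    have he : β^2/16 * L⁻¹ ^ 2 * (4*L^2* ∫ x in neckAnnulus η δ, ‖gradient f x‖^2)
        = β^2/4 * ∫ x in neckAnnulus η δ, ‖gradient f x‖^2 :=
      arith3_aux hL0.ne'
    rw [he] at hmul
    have hfin : β^2/4 * (∫ x in neckAnnulus η δ, ‖gradient f x‖^2)
        ≤ ∫ x in neckAnnulus η δ, ‖gradient f x‖^2 := by
      linarith [mul_nonneg (sub_nonneg.2 hβ4) hG0]
    exact le_trans hmul hfin
end

section
/- Let (a_j), (b_j) be nonnegative sequences, let 0 < γ < μ < 1, let ε_0 ≥ 0, and suppose a_j ≤ b_j + ε_0 Σ_{l=0}^∞ γ^{|l−j|} a_l for all j in an integer interval [s_1, s_2], with a_l = 0 for l ≤ s_1−3 and l ≥ s_2+3 and all a_l ≤ M. Then there exists C_{μ,γ} > 0 such that whenever C_{μ,γ} ε_0 < 1/2, for every j ∈ [s_1, s_2]: Σ_{l=s_1}^{s_2} μ^{|l−j|} a_l ≤ C Σ_{l=s_1}^{s_2} μ^{|l−j|} b_l + C ε_0 (μ^{j−s_1} + μ^{s_2−j})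 M. -/
/-!
Weight the hypothesis at `m` by `μ^{|m-j|}` and sum over `m ∈ [s₁, s₂]`. Since `γ < μ`, the
triangle inequality gives `Σ_m μ^{|m-j|} γ^{|l-m|} ≤ K μ^{|l-j|}` with `K = 2 / (1 - γ/μ)`, so the
error term is at most `ε₀ K` times the `μ`-weighted sum of `a` over `[s₁-2, s₂+2]`. Its part inside
`[s₁, s₂]` is absorbed into the left-hand side once `ε₀ K ≤ 1/2`; the at most four boundary terms
are each bounded by `M` times `μ^{j-s₁}` or `μ^{s₂-j}`.
-/

open Finset

section GeometricKernel

variable {q : ℝ}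

lemma sum_pow_le_inv_one_sub_of_injOn {ι : Type*} (hq0 : 0 ≤ q) (hq1 : q < 1) {s : Finset ι}
    {f : ι → ℕ} (hf : Set.InjOn f s) : ∑ l ∈ s, q ^ f l ≤ (1 - q)⁻¹ := by
  rw [← sum_image hf, ← tsum_geometric_of_lt_one hq0 hq1]
  exact (summable_geometric_of_lt_one hq0 hq1).sum_le_tsum _ fun i _ => pow_nonneg hq0 i

lemma sum_pow_natAbs_sub_le (hq0 : 0 ≤ q) (hq1 : q < 1) (s : Finset ℕ) (m : ℕ) :
    ∑ l ∈ s, q ^ ((l : ℤ) - m).natAbs ≤ 2 / (1 - q) := by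
  have hleft : ∑ l ∈ s.filter (· ≤ m), q ^ ((l : ℤ) - m).natAbs ≤ (1 - q)⁻¹ := by
    rw [sum_congr rfl fun (l : ℕ) hl => show q ^ ((l : ℤ) - m).natAbs = q ^ (m - l) by
      rw [mem_filter] at hl; congr 1; omega]
    exact sum_pow_le_inv_one_sub_of_injOn hq0 hq1 fun x hx y hy h => by
      simp only [coe_filter, Set.mem_ofPred_eq] at hx hy h; omega
  have hright : ∑ l ∈ s.filter (¬ · ≤ m), q ^ ((l : ℤ) - m).natAbs ≤ (1 - q)⁻¹ := by
    rw [sum_congr rfl fun (l : ℕ) hl => show q ^ ((l : ℤ) - m).natAbs = q ^ (l - m) by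
      rw [mem_filter] at hl; congr 1; omega]
    exact sum_pow_le_inv_one_sub_of_injOn hq0 hq1 fun x hx y hy h => by
      simp only [coe_filter, Set.mem_ofPred_eq] at hx hy h; omega
  rw [← sum_filter_add_sum_filter_not s (· ≤ m), div_eq_mul_inv]
  linarith

end GeometricKernel

section Convolution

variable {γ μ : ℝ}

lemma sum_pow_natAbs_mul_pow_natAbs_le (hγ : 0 ≤ γ) (hγμ : γ < μ) (hμ : μ ≤ 1)
    (t : Finset ℕ) (j l : ℕ) :
    ∑ m ∈ t, μ ^ ((m : ℤ) - j).natAbs * γ ^ ((l : ℤ) - m).natAbs ≤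
      2 / (1 - γ / μ) * μ ^ ((l : ℤ) - j).natAbs := by
  have hμ0 : 0 < μ := hγ.trans_lt hγμ
  have hq0 : 0 ≤ γ / μ := div_nonneg hγ hμ0.le
  have hterm : ∀ m : ℕ, μ ^ ((m : ℤ) - j).natAbs * γ ^ ((l : ℤ) - m).natAbs ≤
      μ ^ ((l : ℤ) - j).natAbs * (γ / μ) ^ ((m : ℤ) - l).natAbs := by
    intro m
    have hsymm : ((l : ℤ) - m).natAbs = ((m : ℤ) - l).natAbs := by omega
    calc μ ^ ((m : ℤ) - j).natAbs * γ ^ ((l : ℤ) - m).natAbs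
        = μ ^ (((m : ℤ) - j).natAbs + ((l : ℤ) - m).natAbs) * (γ / μ) ^ ((m : ℤ) - l).natAbs := by
          rw [← hsymm, pow_add, mul_assoc, ← mul_pow, mul_div_cancel₀ γ hμ0.ne']
      _ ≤ μ ^ ((l : ℤ) - j).natAbs * (γ / μ) ^ ((m : ℤ) - l).natAbs :=
          mul_le_mul_of_nonneg_right (pow_le_pow_of_le_one hμ0.le hμ (by omega)) (pow_nonneg hq0 _)
  calc ∑ m ∈ t, μ ^ ((m : ℤ) - j).natAbs * γ ^ ((l : ℤ) - m).natAbs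
      ≤ μ ^ ((l : ℤ) - j).natAbs * ∑ m ∈ t, (γ / μ) ^ ((m : ℤ) - l).natAbs := by
        rw [mul_sum]; exact sum_le_sum fun m _ => hterm m
    _ ≤ μ ^ ((l : ℤ) - j).natAbs * (2 / (1 - γ / μ)) := by
        gcongr
        exact sum_pow_natAbs_sub_le hq0 ((div_lt_one hμ0).2 hγμ) t l
    _ = _ := mul_comm _ _

lemma sum_pow_natAbs_mul_sum_le (hγ : 0 ≤ γ) (hγμ : γ < μ) (hμ : μ ≤ 1) {a : ℕ → ℝ}
    (ha : ∀ l, 0 ≤ a l) (s t : Finset ℕ) (j : ℕ) :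
    ∑ m ∈ t, μ ^ ((m : ℤ) - j).natAbs * ∑ l ∈ s, γ ^ ((l : ℤ) - m).natAbs * a l ≤
      2 / (1 - γ / μ) * ∑ l ∈ s, μ ^ ((l : ℤ) - j).natAbs * a l := by
  calc ∑ m ∈ t, μ ^ ((m : ℤ) - j).natAbs * ∑ l ∈ s, γ ^ ((l : ℤ) - m).natAbs * a l
      = ∑ l ∈ s, (∑ m ∈ t, μ ^ ((m : ℤ) - j).natAbs * γ ^ ((l : ℤ) - m).natAbs) * a l := by
        simp only [mul_sum, sum_mul]
        rw [sum_comm]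
        exact sum_congr rfl fun l _ => sum_congr rfl fun m _ => by ring
    _ ≤ ∑ l ∈ s, 2 / (1 - γ / μ) * μ ^ ((l : ℤ) - j).natAbs * a l :=
        sum_le_sum fun l _ =>
          mul_le_mul_of_nonneg_right (sum_pow_natAbs_mul_pow_natAbs_le hγ hγμ hμ t j l) (ha l)
    _ = _ := by simp only [mul_sum, mul_assoc]

end Convolution

section Boundary

variable {μ M : ℝ} {a : ℕ → ℝ}

lemma sum_pow_natAbs_mul_le_card_mul (hμ0 : 0 ≤ μ) (hμ1 : μ ≤ 1) (ha : ∀ l, 0 ≤ a l)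
    (haM : ∀ l, a l ≤ M) {s : Finset ℕ} {j d : ℕ} (hd : ∀ l ∈ s, d ≤ ((l : ℤ) - j).natAbs) :
    ∑ l ∈ s, μ ^ ((l : ℤ) - j).natAbs * a l ≤ #s * (μ ^ d * M) := by
  rw [← nsmul_eq_mul]
  exact sum_le_card_nsmul _ _ _ fun l hl =>
    mul_le_mul (pow_le_pow_of_le_one hμ0 hμ1 (hd l hl)) (haM l) (ha l) (pow_nonneg hμ0 d)

lemma sum_Ico_pow_natAbs_mul_le (hμ0 : 0 ≤ μ) (hμ1 : μ ≤ 1) (ha : ∀ l, 0 ≤ a l)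
    (haM : ∀ l, a l ≤ M) {s₁ s₂ j : ℕ} (hj₁ : s₁ ≤ j) (hj₂ : j ≤ s₂) :
    ∑ l ∈ Ico (s₁ - 2) (s₂ + 3), μ ^ ((l : ℤ) - j).natAbs * a l ≤
      ∑ l ∈ Icc s₁ s₂, μ ^ ((l : ℤ) - j).natAbs * a l +
        2 * (μ ^ (j - s₁) + μ ^ (s₂ - j)) * M := by
  have hM : 0 ≤ M := (ha 0).trans (haM 0)
  have hlow := sum_pow_natAbs_mul_le_card_mul hμ0 hμ1 ha haM
    (s := Ico (s₁ - 2) s₁) (j := j) (d := j - s₁) fun l hl => by rw [mem_Ico] at hl; omega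
  have hhigh := sum_pow_natAbs_mul_le_card_mul hμ0 hμ1 ha haM
    (s := Ico (s₂ + 1) (s₂ + 3)) (j := j) (d := s₂ - j) fun l hl => by rw [mem_Ico] at hl; omega
  have hcard_low : (#(Ico (s₁ - 2) s₁) : ℝ) ≤ 2 := by
    rw [Nat.card_Ico]; exact_mod_cast (by omega : s₁ - (s₁ - 2) ≤ 2)
  have hcard_high : (#(Ico (s₂ + 1) (s₂ + 3)) : ℝ) = 2 := by
    rw [Nat.card_Ico]; norm_num
  rw [← sum_Ico_consecutive _ (by omega : s₁ - 2 ≤ s₁) (by omega : s₁ ≤ s₂ + 3),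
    ← sum_Ico_consecutive _ (by omega : s₁ ≤ s₂ + 1) (by omega : s₂ + 1 ≤ s₂ + 3),
    Ico_add_one_right_eq_Icc]
  have hlow' := hlow.trans (mul_le_mul_of_nonneg_right hcard_low
    (mul_nonneg (pow_nonneg hμ0 _) hM))
  rw [hcard_high] at hhigh
  linarith

end Boundary

lemma sum_mul_le_sum_mul_add_mul_sum {ι : Type*} {t : Finset ι} {w a b c : ι → ℝ} {ε : ℝ}
    (hw : ∀ m ∈ t, 0 ≤ w m) (h : ∀ m ∈ t, a m ≤ b m + ε * c m) :
    ∑ m ∈ t, w m * a m ≤ ∑ m ∈ t, w m * b m + ε * ∑ m ∈ t, w m * c m := by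
  rw [mul_sum, ← sum_add_distrib]
  exact sum_le_sum fun m hm => by
    nlinarith [mul_le_mul_of_nonneg_left (h m hm) (hw m hm)]

lemma le_two_mul_add_of_le_add_mul {x b e δ : ℝ} (hx : 0 ≤ x) (hδ : δ ≤ 1 / 2)
    (h : x ≤ b + δ * (x + e)) : x ≤ 2 * b + 2 * δ * e := by
  nlinarith [mul_le_mul_of_nonneg_right hδ hx]

/-- Discrete dyadic absorption lemma: if `a_j ≤ b_j + ε₀ Σ_l γ^{|l−j|} a_l` on
`[s₁,s₂]`, with `a` vanishing outside `[s₁−2, s₂+2]` and bounded by `M`, then for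
`γ < μ < 1` there is `C = C(μ,γ)` such that whenever `C ε₀ < 1/2`, for every
`j ∈ [s₁,s₂]`:
`Σ_{l=s₁}^{s₂} μ^{|l−j|} a_l ≤ C Σ_{l=s₁}^{s₂} μ^{|l−j|} b_l + C ε₀ (μ^{j−s₁} + μ^{s₂−j}) M`. -/
theorem discrete_dyadic_absorption (γ μ : ℝ) (hγ : 0 < γ) (hγμ : γ < μ) (hμ : μ < 1) :
    ∃ C : ℝ, 0 < C ∧
      ∀ (a b : ℕ → ℝ) (ε₀ M : ℝ) (s₁ s₂ : ℕ),
        (∀ l, 0 ≤ a l) → (∀ l, 0 ≤ b l) → 0 ≤ ε₀ → 0 ≤ M →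
        (∀ j, s₁ ≤ j → j ≤ s₂ →
          a j ≤ b j + ε₀ * ∑' l : ℕ, γ ^ (Int.natAbs ((l : ℤ) - (j : ℤ))) * a l) →
        (∀ l, l + 3 ≤ s₁ → a l = 0) → (∀ l, s₂ + 3 ≤ l → a l = 0) →
        (∀ l, a l ≤ M) →
        C * ε₀ < 1 / 2 →
        ∀ j, s₁ ≤ j → j ≤ s₂ →
          ∑ l ∈ Finset.Icc s₁ s₂, μ ^ (Int.natAbs ((l : ℤ) - (j : ℤ))) * a l ≤
            C * ∑ l ∈ Finset.Icc s₁ s₂, μ ^ (Int.natAbs ((l : ℤ) - (j : ℤ))) * b l +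
            C * ε₀ * (μ ^ (j - s₁) + μ ^ (s₂ - j)) * M := by
  have hμ0 : 0 < μ := hγ.trans hγμ
  set K := 2 / (1 - γ / μ)
  have hK : 2 ≤ K := by
    have hq : 0 < 1 - γ / μ := sub_pos.2 ((div_lt_one hμ0).2 hγμ)
    rw [le_div_iff₀ hq]
    nlinarith [div_nonneg hγ.le hμ0.le]
  refine ⟨4 * K, by positivity, ?_⟩
  intro a b ε₀ M s₁ s₂ ha hb hε _ hyp hlow hhigh haM hsmall j hj₁ hj₂
  have hweight : ∀ l : ℕ, 0 ≤ μ ^ ((l : ℤ) - j).natAbs := fun l => pow_nonneg hμ0.le _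
  set R := Ico (s₁ - 2) (s₂ + 3)
  have hsupp : ∀ m : ℕ, ∑' l : ℕ, γ ^ ((l : ℤ) - m).natAbs * a l =
      ∑ l ∈ R, γ ^ ((l : ℤ) - m).natAbs * a l := fun m =>
    tsum_eq_sum fun l hl => by
      obtain h | h : l + 3 ≤ s₁ ∨ s₂ + 3 ≤ l := by rw [mem_Ico] at hl; omega
      · rw [hlow l h, mul_zero]
      · rw [hhigh l h, mul_zero]
  have hweighted := sum_mul_le_sum_mul_add_mul_sum (fun m _ => hweight m) fun m hm =>
    hsupp m ▸ hyp m (mem_Icc.1 hm).1 (mem_Icc.1 hm).2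
  have hconv := sum_pow_natAbs_mul_sum_le hγ.le hγμ hμ.le ha R (Icc s₁ s₂) j
  have hbdry := sum_Ico_pow_natAbs_mul_le hμ0.le hμ.le ha haM hj₁ hj₂
  have habsorb := le_two_mul_add_of_le_add_mul
    (sum_nonneg fun l _ => mul_nonneg (hweight l) (ha l)) (by linarith : ε₀ * K ≤ 1 / 2)
    (e := 2 * (μ ^ (j - s₁) + μ ^ (s₂ - j)) * M) (hweighted.trans (by
      rw [mul_assoc ε₀ K]; gcongr; exact hconv.trans (by gcongr)))
  nlinarith [sum_nonneg fun l (_ : l ∈ Icc s₁ s₂) => mul_nonneg (hweight l) (hb l)]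
end

section
/- Let A(η,δ) = B_η \ closure(B_{δ/η}) ⊂ ℝ² with 0 < δ < η² < 1, and let u be a map such that for every x ∈ A(η,δ) one has the annular ε-regularity estimate |∇u(x)| ≤ (C/|x|)·‖∇u‖_{L²(B_{3|x|/2} \ B_{3|x|/8})}. Then ‖∇u‖_{L^{2,∞}(A(η,δ))} ≤ C' · sup_{δ/(2η) < ρ < η} (∫_{B_{2ρ} \ B_ρ} |∇u|² dx)^{1/2}, where ‖g‖_{L^{2,∞}(Ω)} = sup_{λ>0} λ |{x ∈ Ω : |g(x)| ≥ λ}|^{1/2}. -/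
/-!
Write `g = |∇u|`, `S` for the supremum of the dyadic energies, and `a < |x| < b` for the neck
(`a = δ/η`, `b = η`). Split the superlevel set `{g ≥ t}` at `|x| = 3a/2`. The inner collar
`a < |x| < 3a/2` lies in the single dyadic annulus `3a/4 < |x| < 3a/2`, so Chebyshev's
inequality bounds its contribution by `S`. Farther out, the ε-regularity annulus
`3|x|/8 < |y| < 3|x|/2` is covered by three dyadic annuli with radii in `(a/2, b)`, whence
`g x ≤ √3 C S / |x|`; the rest of the superlevel set then lies in the ball of radius
`√3 C S / t`, which is the weak-`L²` bound for `1/|x|` in the plane.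
-/

open MeasureTheory Metric
open scoped ENNReal

/-- The weak-`L²` (Marcinkiewicz) quasinorm
`‖g‖_{L^{2,∞}(Ω)} = sup_{t>0} t |{x ∈ Ω : g x ≥ t}|^{1/2}`. -/
noncomputable def weakL2Norm (Ω : Set (EuclideanSpace ℝ (Fin 2)))
    (g : EuclideanSpace ℝ (Fin 2) → ℝ) : ℝ≥0∞ :=
  ⨆ t ∈ Set.Ioi (0 : ℝ), ENNReal.ofReal t * (volume {x | x ∈ Ω ∧ t ≤ g x}) ^ (1 / 2 : ℝ)

open Set Module

namespace ENNReal

theorem sq_mul_rpow_half (a b : ℝ≥0∞) :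
    (a ^ 2 * b) ^ (1 / 2 : ℝ) = a * b ^ (1 / 2 : ℝ) := by
  rw [mul_rpow_of_nonneg _ _ (by norm_num), ← rpow_natCast, ← rpow_mul]
  norm_num

theorem ofReal_mul_le_of_le_div_mul {t C r : ℝ} {M : ℝ≥0∞} (hr : 0 < r)
    (h : ENNReal.ofReal t ≤ ENNReal.ofReal (C / r) * M) :
    ENNReal.ofReal (t * r) ≤ ENNReal.ofReal C * M :=
  calc ENNReal.ofReal (t * r) = ENNReal.ofReal t * ENNReal.ofReal r := ofReal_mul' hr.le
    _ ≤ ENNReal.ofReal (C / r) * M * ENNReal.ofReal r := by gcongr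
    _ = ENNReal.ofReal C * M := by
      rw [mul_right_comm, ← ofReal_mul' hr.le, div_mul_cancel₀ _ hr.ne']

end ENNReal

theorem mul_measure_rpow_half_le_setLIntegral_sq {α : Type*} [MeasurableSpace α]
    {μ : Measure α} {g : α → ℝ} (hg : Measurable g) {s A : Set α} (hsA : s ⊆ A) {t : ℝ}
    (ht : 0 ≤ t) (hgs : ∀ x ∈ s, t ≤ g x) :
    ENNReal.ofReal t * μ s ^ (1 / 2 : ℝ) ≤
      (∫⁻ y in A, ENNReal.ofReal (g y ^ 2) ∂μ) ^ (1 / 2 : ℝ) := by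
  rw [← ENNReal.sq_mul_rpow_half]
  gcongr
  calc ENNReal.ofReal t ^ 2 * μ s = ∫⁻ _ in s, ENNReal.ofReal (t ^ 2) ∂μ := by
        rw [setLIntegral_const, ENNReal.ofReal_pow ht]
    _ ≤ ∫⁻ y in s, ENNReal.ofReal (g y ^ 2) ∂μ :=
        setLIntegral_mono (by fun_prop) fun x hx =>
          ENNReal.ofReal_le_ofReal (pow_le_pow_left₀ ht (hgs x hx) 2)
    _ ≤ ∫⁻ y in A, ENNReal.ofReal (g y ^ 2) ∂μ := lintegral_mono_set hsA

theorem mul_measure_rpow_inv_finrank_le {E : Type*} [NormedAddCommGroup E] [NormedSpace ℝ E]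
    [FiniteDimensional ℝ E] [Nontrivial E] [MeasurableSpace E] [BorelSpace E]
    (μ : Measure E) [μ.IsAddHaarMeasure] {s : Set E} {t : ℝ} (ht : 0 < t) {M : ℝ≥0∞}
    (hs : ∀ x ∈ s, ENNReal.ofReal (t * ‖x‖) ≤ M) :
    ENNReal.ofReal t * μ s ^ (finrank ℝ E : ℝ)⁻¹ ≤
      M * μ (closedBall 0 1) ^ (finrank ℝ E : ℝ)⁻¹ := by
  set d := finrank ℝ E
  rcases eq_or_ne M ⊤ with rfl | hM
  · rw [ENNReal.top_mul (ENNReal.rpow_pos (measure_closedBall_pos μ 0 one_pos)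
      measure_closedBall_lt_top.ne).ne']
    exact le_top
  have hsub : s ⊆ closedBall 0 (M.toReal / t) := fun x hx => by
    rw [mem_closedBall_zero_iff, le_div_iff₀ ht, mul_comm]
    exact (ENNReal.ofReal_le_iff_le_toReal hM).1 (hs x hx)
  calc ENNReal.ofReal t * μ s ^ (d : ℝ)⁻¹
      ≤ ENNReal.ofReal t *
          (ENNReal.ofReal (M.toReal / t) ^ d * μ (closedBall 0 1)) ^ (d : ℝ)⁻¹ := by
        gcongr
        rw [← ENNReal.ofReal_pow (by positivity)]
        exact (measure_mono hsub).trans_eq (μ.addHaar_closedBall' 0 (by positivity))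
    _ = M * μ (closedBall 0 1) ^ (d : ℝ)⁻¹ := by
        rw [ENNReal.mul_rpow_of_nonneg _ _ (by positivity),
          ENNReal.pow_rpow_inv_natCast finrank_pos.ne', ← mul_assoc, ← ENNReal.ofReal_mul ht.le,
          mul_div_cancel₀ _ ht.ne', ENNReal.ofReal_toReal hM]

section Annulus

variable {E : Type*} [NormedAddCommGroup E]

def annulus (a b : ℝ) : Set E := ball 0 b \ closedBall 0 a

theorem mem_annulus {a b : ℝ} {y : E} : y ∈ annulus a b ↔ a < ‖y‖ ∧ ‖y‖ < b := by
  simp [annulus, and_comm]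

theorem annulus_subset_union_dyadic (r : ℝ) :
    (annulus (3 * r / 8) (3 * r / 2) : Set E) ⊆ annulus (3 * r / 8) (2 * (3 * r / 8)) ∪
      annulus (r / 2) (2 * (r / 2)) ∪ annulus (3 * r / 4) (2 * (3 * r / 4)) := by
  intro y hy
  simp only [mem_union, mem_annulus] at hy ⊢
  rcases lt_trichotomy ‖y‖ (3 * r / 4) with h | h | h
  · exact Or.inl (Or.inl ⟨hy.1, by linarith⟩)
  · exact Or.inl (Or.inr ⟨by linarith, by linarith⟩)
  · exact Or.inr ⟨h, by linarith⟩

variable [MeasurableSpace E] {μ : Measure E} {f : E → ℝ≥0∞} {a b : ℝ}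

noncomputable def dyadicL2Sup (μ : Measure E) (f : E → ℝ≥0∞) (a b : ℝ) : ℝ≥0∞ :=
  ⨆ ρ ∈ Ioo a b, (∫⁻ y in annulus ρ (2 * ρ), f y ∂μ) ^ (1 / 2 : ℝ)

theorem rpow_half_setLIntegral_le_dyadicL2Sup {ρ : ℝ} (hρ : ρ ∈ Ioo a b) :
    (∫⁻ y in annulus ρ (2 * ρ), f y ∂μ) ^ (1 / 2 : ℝ) ≤ dyadicL2Sup μ f a b :=
  le_iSup₂ (f := fun ρ _ => (∫⁻ y in annulus ρ (2 * ρ), f y ∂μ) ^ (1 / 2 : ℝ)) ρ hρ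

theorem setLIntegral_le_dyadicL2Sup_sq {ρ : ℝ} (hρ : ρ ∈ Ioo a b) :
    ∫⁻ y in annulus ρ (2 * ρ), f y ∂μ ≤ dyadicL2Sup μ f a b ^ 2 := by
  rw [← ENNReal.rpow_two, ← ENNReal.rpow_inv_le_iff two_pos, ← one_div]
  exact rpow_half_setLIntegral_le_dyadicL2Sup hρ

theorem rpow_half_setLIntegral_annulus_le_sqrt_three_mul {r : ℝ} (ha : 0 ≤ a)
    (har : a < 3 * r / 8) (hrb : 3 * r / 4 < b) :
    (∫⁻ y in annulus (3 * r / 8) (3 * r / 2), f y ∂μ) ^ (1 / 2 : ℝ) ≤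
      3 ^ (1 / 2 : ℝ) * dyadicL2Sup μ f a b := by
  set S := dyadicL2Sup μ f a b
  have hS : ∀ ρ, a < ρ → ρ < b → ∫⁻ y in annulus ρ (2 * ρ), f y ∂μ ≤ S ^ 2 :=
    fun ρ h₁ h₂ => setLIntegral_le_dyadicL2Sup_sq ⟨h₁, h₂⟩
  calc (∫⁻ y in annulus (3 * r / 8) (3 * r / 2), f y ∂μ) ^ (1 / 2 : ℝ)
      ≤ (S ^ 2 * 3) ^ (1 / 2 : ℝ) := by
        gcongr
        calc ∫⁻ y in annulus (3 * r / 8) (3 * r / 2), f y ∂μ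
            ≤ (∫⁻ y in annulus (3 * r / 8) (2 * (3 * r / 8)), f y ∂μ) +
                (∫⁻ y in annulus (r / 2) (2 * (r / 2)), f y ∂μ) +
                ∫⁻ y in annulus (3 * r / 4) (2 * (3 * r / 4)), f y ∂μ :=
              (lintegral_mono_set (annulus_subset_union_dyadic r)).trans <|
                (lintegral_union_le _ _ _).trans (by gcongr; exact lintegral_union_le _ _ _)
          _ ≤ S ^ 2 + S ^ 2 + S ^ 2 := by
              gcongr <;> apply hS <;> linarith
          _ = S ^ 2 * 3 := by ring
    _ = 3 ^ (1 / 2 : ℝ) * S := by rw [ENNReal.sq_mul_rpow_half, mul_comm]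

end Annulus

section Neck

local notation "ℝ²" => EuclideanSpace ℝ (Fin 2)

variable {g : ℝ² → ℝ} {C a b t : ℝ}

-- `1` comes from the inner collar, `3 ^ (1 / 2)` from the three dyadic annuli and
-- `|B₁| ^ (1 / 2)` from the weak-`L²` norm of `1 / |x|`.
noncomputable def neckConstant (C : ℝ) : ℝ≥0∞ :=
  1 + ENNReal.ofReal C * 3 ^ (1 / 2 : ℝ) * volume (closedBall (0 : ℝ²) 1) ^ (1 / 2 : ℝ)

theorem neckConstant_ne_top (C : ℝ) : neckConstant C ≠ ⊤ := by
  have := (measure_closedBall_lt_top (μ := volume) (x := (0 : ℝ²)) (r := 1)).ne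
  unfold neckConstant
  finiteness

def AnnularEpsRegularity (C : ℝ) (g : ℝ² → ℝ) (a b : ℝ) : Prop :=
  ∀ x ∈ annulus a b, ENNReal.ofReal (g x) ≤
    ENNReal.ofReal (C / ‖x‖) *
      (∫⁻ y in annulus (3 * ‖x‖ / 8) (3 * ‖x‖ / 2), ENNReal.ofReal (g y ^ 2)) ^ (1 / 2 : ℝ)

theorem mul_volume_inner_levelSet_le (hg : Measurable g) (ha : 0 < a) (hab : a < b)
    (ht : 0 < t) :
    ENNReal.ofReal t *
        volume ({x | x ∈ annulus a b ∧ t ≤ g x} ∩ ball 0 (3 * a / 2)) ^ (1 / 2 : ℝ) ≤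
      dyadicL2Sup volume (fun y => ENNReal.ofReal (g y ^ 2)) (a / 2) b := by
  refine (mul_measure_rpow_half_le_setLIntegral_sq hg
    (A := annulus (3 * a / 4) (2 * (3 * a / 4))) ?_ ht.le fun x hx => hx.1.2).trans
    (rpow_half_setLIntegral_le_dyadicL2Sup ⟨by linarith, by linarith⟩)
  rintro x ⟨⟨hx, -⟩, hx'⟩
  rw [mem_annulus] at hx ⊢
  rw [mem_ball_zero_iff] at hx'
  constructor <;> linarith

theorem ofReal_mul_norm_le_of_mem_outer_levelSet (ha : 0 < a)
    (hg : AnnularEpsRegularity C g a b) {x : ℝ²}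
    (hx : x ∈ {x | x ∈ annulus a b ∧ t ≤ g x} \ ball 0 (3 * a / 2)) :
    ENNReal.ofReal (t * ‖x‖) ≤ ENNReal.ofReal C * 3 ^ (1 / 2 : ℝ) *
      dyadicL2Sup volume (fun y => ENNReal.ofReal (g y ^ 2)) (a / 2) b := by
  obtain ⟨⟨hx_mem, hgx⟩, hx_far⟩ := hx
  obtain ⟨hax, hxb⟩ := mem_annulus.1 hx_mem
  have hx_far : 3 * a / 2 ≤ ‖x‖ := by simpa using hx_far
  rw [mul_assoc]
  refine ENNReal.ofReal_mul_le_of_le_div_mul (by linarith) ?_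
  calc ENNReal.ofReal t ≤ ENNReal.ofReal (g x) := ENNReal.ofReal_le_ofReal hgx
    _ ≤ _ := hg x hx_mem
    _ ≤ _ := by
      gcongr
      exact rpow_half_setLIntegral_annulus_le_sqrt_three_mul (by linarith) (by linarith)
        (by linarith)

theorem mul_volume_levelSet_le (hg : Measurable g) (ha : 0 < a) (hab : a < b)
    (hreg : AnnularEpsRegularity C g a b) (ht : 0 < t) :
    ENNReal.ofReal t * volume {x | x ∈ annulus a b ∧ t ≤ g x} ^ (1 / 2 : ℝ) ≤
      neckConstant C * dyadicL2Sup volume (fun y => ENNReal.ofReal (g y ^ 2)) (a / 2) b := by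
  set L := {x | x ∈ annulus a b ∧ t ≤ g x}
  set S := dyadicL2Sup volume (fun y => ENNReal.ofReal (g y ^ 2)) (a / 2) b
  set V := volume (closedBall (0 : ℝ²) 1)
  have outer : ENNReal.ofReal t * volume (L \ ball 0 (3 * a / 2)) ^ (1 / 2 : ℝ) ≤
      ENNReal.ofReal C * 3 ^ (1 / 2 : ℝ) * S * V ^ (1 / 2 : ℝ) := by
    have h := mul_measure_rpow_inv_finrank_le volume ht
      fun x hx => ofReal_mul_norm_le_of_mem_outer_levelSet ha hreg hx
    rwa [finrank_euclideanSpace_fin, ← one_div] at h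
  calc ENNReal.ofReal t * volume L ^ (1 / 2 : ℝ)
      ≤ ENNReal.ofReal t * (volume (L ∩ ball 0 (3 * a / 2)) ^ (1 / 2 : ℝ) +
          volume (L \ ball 0 (3 * a / 2)) ^ (1 / 2 : ℝ)) := by
        gcongr
        exact (ENNReal.rpow_le_rpow (measure_le_inter_add_sdiff _ _ _) (by norm_num)).trans
          (ENNReal.rpow_add_le_add_rpow _ _ (by norm_num) (by norm_num))
    _ ≤ S + ENNReal.ofReal C * 3 ^ (1 / 2 : ℝ) * S * V ^ (1 / 2 : ℝ) := by
        rw [mul_add]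
        exact add_le_add (mul_volume_inner_levelSet_le hg ha hab ht) outer
    _ = neckConstant C * S := by unfold neckConstant; ring

theorem weakL2Norm_annulus_le (hg : Measurable g) (ha : 0 < a) (hab : a < b)
    (hreg : AnnularEpsRegularity C g a b) :
    weakL2Norm (annulus a b) g ≤
      neckConstant C * dyadicL2Sup volume (fun y => ENNReal.ofReal (g y ^ 2)) (a / 2) b :=
  iSup₂_le fun _ ht => mul_volume_levelSet_le hg ha hab hreg ht

theorem weakL2Norm_annulus_eq_zero_of_nonpos (hb : b ≤ 0) (g : ℝ² → ℝ) :
    weakL2Norm (annulus a b) g = 0 := by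
  have : (annulus a b : Set ℝ²) = ∅ := eq_empty_of_forall_notMem fun x hx =>
    (norm_nonneg x).not_gt ((mem_annulus.1 hx).2.trans_le hb)
  simp [weakL2Norm, this]

end Neck

theorem weak_L2_neck_estimate_general {n : ℕ} (C : ℝ) :
    ∃ C' : ℝ, 0 < C' ∧
      ∀ (η δ : ℝ), 0 < δ → δ < η ^ 2 → η ^ 2 < 1 →
        ∀ u : EuclideanSpace ℝ (Fin 2) → EuclideanSpace ℝ (Fin (n + 1)),
          (∀ x ∈ ball (0 : EuclideanSpace ℝ (Fin 2)) η \ closedBall 0 (δ / η),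
            ENNReal.ofReal ‖fderiv ℝ u x‖ ≤
              ENNReal.ofReal (C / ‖x‖) *
                (∫⁻ y in ball (0 : EuclideanSpace ℝ (Fin 2)) (3 * ‖x‖ / 2) \ closedBall 0 (3 * ‖x‖ / 8),
                  ENNReal.ofReal (‖fderiv ℝ u y‖ ^ 2)) ^ (1 / 2 : ℝ)) →
          weakL2Norm (ball (0 : EuclideanSpace ℝ (Fin 2)) η \ closedBall 0 (δ / η))
              (fun x => ‖fderiv ℝ u x‖) ≤
            ENNReal.ofReal C' *
              ⨆ ρ ∈ Set.Ioo (δ / (2 * η)) η,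
                (∫⁻ y in ball (0 : EuclideanSpace ℝ (Fin 2)) (2 * ρ) \ closedBall 0 ρ,
                  ENNReal.ofReal (‖fderiv ℝ u y‖ ^ 2)) ^ (1 / 2 : ℝ) := by
  refine ⟨(neckConstant C).toReal,
    ENNReal.toReal_pos (by simp [neckConstant]) (neckConstant_ne_top C), ?_⟩
  intro η δ hδ hδη _ u hu
  rw [ENNReal.ofReal_toReal (neckConstant_ne_top C)]
  rcases le_or_gt η 0 with hη | hη
  · exact (weakL2Norm_annulus_eq_zero_of_nonpos hη _).trans_le zero_le
  · rw [show δ / (2 * η) = δ / η / 2 by ring]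
    exact weakL2Norm_annulus_le (measurable_fderiv ℝ u).norm (div_pos hδ hη)
      (by rwa [div_lt_iff₀ hη, ← sq]) hu

/-- From the annular `ε`-regularity bound
`|∇u(x)| ≤ (C/|x|)·‖∇u‖_{L²(B_{3|x|/2}∖B_{3|x|/8})}` on the neck annulus
`A(η,δ) = B_η ∖ closure(B_{δ/η})`, one deduces
`‖∇u‖_{L^{2,∞}(A(η,δ))} ≤ C'·sup_{δ/(2η)<ρ<η} (∫_{B_{2ρ}∖B_ρ}|∇u|²)^{1/2}`. -/
theorem weak_L2_neck_estimate {n : ℕ} (C : ℝ) (hC : 0 < C) :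
    ∃ C' : ℝ, 0 < C' ∧
      ∀ (η δ : ℝ), 0 < δ → δ < η ^ 2 → η ^ 2 < 1 →
        ∀ u : EuclideanSpace ℝ (Fin 2) → EuclideanSpace ℝ (Fin (n + 1)),
          (∀ x ∈ ball (0 : EuclideanSpace ℝ (Fin 2)) η \ closedBall 0 (δ / η),
            ENNReal.ofReal ‖fderiv ℝ u x‖ ≤
              ENNReal.ofReal (C / ‖x‖) *
                (∫⁻ y in ball (0 : EuclideanSpace ℝ (Fin 2)) (3 * ‖x‖ / 2) \ closedBall 0 (3 * ‖x‖ / 8),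
                  ENNReal.ofReal (‖fderiv ℝ u y‖ ^ 2)) ^ (1 / 2 : ℝ)) →
          weakL2Norm (ball (0 : EuclideanSpace ℝ (Fin 2)) η \ closedBall 0 (δ / η))
              (fun x => ‖fderiv ℝ u x‖) ≤
            ENNReal.ofReal C' *
              ⨆ ρ ∈ Set.Ioo (δ / (2 * η)) η,
                (∫⁻ y in ball (0 : EuclideanSpace ℝ (Fin 2)) (2 * ρ) \ closedBall 0 ρ,
                  ENNReal.ofReal (‖fderiv ℝ u y‖ ^ 2)) ^ (1 / 2 : ℝ) :=
  weak_L2_neck_estimate_general C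
end
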